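/- arXiv:1411.7957 — 3 statements merged into one kernel-verified Lean document; each statement's English description precedes it below -/
import Mathlib

section
/- Let (A, μ) be a left alternative algebra and α: A → A an algebra endomorphism. Then (A, μ_α, α), where μ_α = α ∘ μ, is a left Hom-alternative algebra. -/
/-- Left Hom-alternative identity. -/
def LeftHomAlt {K A : Type*} [Field K] [AddCommGroup A] [Module K A]
    (mu : A →ₗ[K] A →ₗ[K] A) (alpha : A →ₗ[K] A) : Prop :=
  ∀ x y : A, mu (alpha x) (mu x y) = mu (mu x x) (alpha y)

/-- Right Hom-alternative identity. -/
def RightHomAlt {K A : Type*} [Field K] [AddCommGroup A] [Module K A]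
    (mu : A →ₗ[K] A →ₗ[K] A) (alpha : A →ₗ[K] A) : Prop :=
  ∀ x y : A, mu (alpha x) (mu y y) = mu (mu x y) (alpha y)

theorem stmt6_general {K A : Type*} [Field K] [AddCommGroup A] [Module K A]
    (mu : A →ₗ[K] A →ₗ[K] A) (alpha : A →ₗ[K] A)
    (halt : ∀ x y : A, mu x (mu x y) = mu (mu x x) y)
    (hend : ∀ x y : A, alpha (mu x y) = mu (alpha x) (alpha y)) :
    LeftHomAlt (mu.compr₂ alpha) alpha := by
  intro x y
  change alpha (mu (alpha x) (alpha (mu x y))) = alpha (mu (alpha (mu x x)) (alpha y))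
  rw [hend x y, hend x x, halt]

theorem stmt6 {K A : Type*} [Field K] [CharZero K] [AddCommGroup A] [Module K A]
    (mu : A →ₗ[K] A →ₗ[K] A) (alpha : A →ₗ[K] A)
    (halt : ∀ x y : A, mu x (mu x y) = mu (mu x x) y)
    (hend : ∀ x y : A, alpha (mu x y) = mu (alpha x) (alpha y)) :
    LeftHomAlt (mu.compr₂ alpha) alpha :=
  stmt6_general mu alpha halt hend
end

section
/- Let (A, Δ, γ) be a Poisson coalgebra and α: A → A a Poisson coalgebra endomorphism. Then (A, Δ∘α, γ∘α, α) is a Hom-Poisson coalgebra. -/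
open TensorProduct

/-- Flip on a tensor product. -/
noncomputable def tauT (K A B : Type*) [Field K] [AddCommGroup A] [Module K A]
    [AddCommGroup B] [Module K B] : A ⊗[K] B →ₗ[K] B ⊗[K] A :=
  (TensorProduct.comm K A B).toLinearMap

/-- Cyclic permutation x₁⊗x₂⊗x₃ ↦ x₃⊗x₁⊗x₂ on A⊗(A⊗A). -/
noncomputable def cyc (K A : Type*) [Field K] [AddCommGroup A] [Module K A] :
    A ⊗[K] (A ⊗[K] A) →ₗ[K] A ⊗[K] (A ⊗[K] A) :=
  (TensorProduct.comm K (A ⊗[K] A) A).toLinearMap ∘ₗ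
    (TensorProduct.assoc K A A A).symm.toLinearMap

/-- τ⊗Id acting on the first two factors of A⊗(A⊗M). -/
noncomputable def swap12 (K A M : Type*) [Field K] [AddCommGroup A] [Module K A]
    [AddCommGroup M] [Module K M] : A ⊗[K] (A ⊗[K] M) →ₗ[K] A ⊗[K] (A ⊗[K] M) :=
  (TensorProduct.assoc K A A M).toLinearMap ∘ₗ
    TensorProduct.map (tauT K A A) LinearMap.id ∘ₗ
      (TensorProduct.assoc K A A M).symm.toLinearMap

/-- A (not necessarily cocommutative) Hom-Poisson coalgebra. -/
def IsHomPoissonCoalgebra (K A : Type*) [Field K] [AddCommGroup A] [Module K A]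
    (Δ γ : A →ₗ[K] A ⊗[K] A) (α : A →ₗ[K] A) : Prop :=
  Δ ∘ₗ α = TensorProduct.map α α ∘ₗ Δ ∧
  TensorProduct.map α Δ ∘ₗ Δ =
    (TensorProduct.assoc K A A A).toLinearMap ∘ₗ TensorProduct.map Δ α ∘ₗ Δ ∧
  γ = -(tauT K A A ∘ₗ γ) ∧
  γ ∘ₗ α = TensorProduct.map α α ∘ₗ γ ∧
  (LinearMap.id + cyc K A + cyc K A ∘ₗ cyc K A) ∘ₗ TensorProduct.map α γ ∘ₗ γ = 0 ∧
  TensorProduct.map α Δ ∘ₗ γ =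
    (TensorProduct.assoc K A A A).toLinearMap ∘ₗ TensorProduct.map γ α ∘ₗ Δ +
      swap12 K A A ∘ₗ TensorProduct.map α γ ∘ₗ Δ

/-!
Every Hom-identity is the corresponding untwisted identity precomposed with `α ∘ α`: since `α`
commutes with `Δ` and `γ`, the inner `α` of `F ∘ α` can be pushed through the next cooperation,
which turns `α ⊗ (F ∘ α)` into `Id ⊗ F` (and `(F ∘ α) ⊗ α` into `F ⊗ Id`).
-/

section Twist

open LinearMap

variable {R A M : Type*} [CommSemiring R] [AddCommMonoid A] [Module R A] [AddCommMonoid M]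
  [Module R M] {α : A →ₗ[R] A} {f : A →ₗ[R] A ⊗[R] A}

theorem comp_comp_eq_map_comp_of_comp_eq (hα : f ∘ₗ α = map α α ∘ₗ f) :
    (f ∘ₗ α) ∘ₗ α = map α α ∘ₗ f ∘ₗ α := by
  rw [← comp_assoc, ← hα]

theorem map_comp_right_comp_of_comp_eq (hα : f ∘ₗ α = map α α ∘ₗ f) (F : A →ₗ[R] M) :
    map α (F ∘ₗ α) ∘ₗ f ∘ₗ α = map id F ∘ₗ f ∘ₗ α ∘ₗ α := by
  rw [← comp_assoc α α f, comp_comp_eq_map_comp_of_comp_eq hα, ← comp_assoc (f ∘ₗ α) (map α α),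
    ← map_comp, id_comp]

theorem map_comp_left_comp_of_comp_eq (hα : f ∘ₗ α = map α α ∘ₗ f) (F : A →ₗ[R] M) :
    map (F ∘ₗ α) α ∘ₗ f ∘ₗ α = map F id ∘ₗ f ∘ₗ α ∘ₗ α := by
  rw [← comp_assoc α α f, comp_comp_eq_map_comp_of_comp_eq hα, ← comp_assoc (f ∘ₗ α) (map α α),
    ← map_comp, id_comp]

end Twist

theorem stmt10_general {K A : Type*} [Field K] [AddCommGroup A] [Module K A]
    (Δ γ : A →ₗ[K] A ⊗[K] A) (α : A →ₗ[K] A)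
    -- (A, Δ, γ) is a Poisson coalgebra:
    (hcoassoc : TensorProduct.map LinearMap.id Δ ∘ₗ Δ =
      (TensorProduct.assoc K A A A).toLinearMap ∘ₗ TensorProduct.map Δ LinearMap.id ∘ₗ Δ)
    (hskew : γ = -(tauT K A A ∘ₗ γ))
    (hjac : (LinearMap.id + cyc K A + cyc K A ∘ₗ cyc K A) ∘ₗ
      TensorProduct.map LinearMap.id γ ∘ₗ γ = 0)
    (hleib : TensorProduct.map LinearMap.id Δ ∘ₗ γ =
      (TensorProduct.assoc K A A A).toLinearMap ∘ₗ TensorProduct.map γ LinearMap.id ∘ₗ Δ +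
        swap12 K A A ∘ₗ TensorProduct.map LinearMap.id γ ∘ₗ Δ)
    -- α is a Poisson coalgebra endomorphism:
    (hαΔ : Δ ∘ₗ α = TensorProduct.map α α ∘ₗ Δ)
    (hαγ : γ ∘ₗ α = TensorProduct.map α α ∘ₗ γ) :
    IsHomPoissonCoalgebra K A (Δ ∘ₗ α) (γ ∘ₗ α) α := by
  refine ⟨comp_comp_eq_map_comp_of_comp_eq hαΔ, ?_, ?_,
    comp_comp_eq_map_comp_of_comp_eq hαγ, ?_, ?_⟩
  · rw [map_comp_right_comp_of_comp_eq hαΔ, map_comp_left_comp_of_comp_eq hαΔ,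
      ← LinearMap.comp_assoc _ Δ, hcoassoc]
    simp only [LinearMap.comp_assoc]
  · conv_lhs => rw [hskew]
    rw [LinearMap.neg_comp, LinearMap.comp_assoc]
  · rw [map_comp_right_comp_of_comp_eq hαγ, ← LinearMap.comp_assoc _ γ, ← LinearMap.comp_assoc,
      hjac, LinearMap.zero_comp]
  · rw [map_comp_right_comp_of_comp_eq hαγ, map_comp_left_comp_of_comp_eq hαΔ,
      map_comp_right_comp_of_comp_eq hαΔ, ← LinearMap.comp_assoc _ γ, hleib]
    simp only [LinearMap.add_comp, LinearMap.comp_assoc]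

theorem stmt10 {K A : Type*} [Field K] [CharZero K] [AddCommGroup A] [Module K A]
    (Δ γ : A →ₗ[K] A ⊗[K] A) (α : A →ₗ[K] A)
    -- (A, Δ, γ) is a Poisson coalgebra:
    (hcoassoc : TensorProduct.map LinearMap.id Δ ∘ₗ Δ =
      (TensorProduct.assoc K A A A).toLinearMap ∘ₗ TensorProduct.map Δ LinearMap.id ∘ₗ Δ)
    (hskew : γ = -(tauT K A A ∘ₗ γ))
    (hjac : (LinearMap.id + cyc K A + cyc K A ∘ₗ cyc K A) ∘ₗ
      TensorProduct.map LinearMap.id γ ∘ₗ γ = 0)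
    (hleib : TensorProduct.map LinearMap.id Δ ∘ₗ γ =
      (TensorProduct.assoc K A A A).toLinearMap ∘ₗ TensorProduct.map γ LinearMap.id ∘ₗ Δ +
        swap12 K A A ∘ₗ TensorProduct.map LinearMap.id γ ∘ₗ Δ)
    -- α is a Poisson coalgebra endomorphism:
    (hαΔ : Δ ∘ₗ α = TensorProduct.map α α ∘ₗ Δ)
    (hαγ : γ ∘ₗ α = TensorProduct.map α α ∘ₗ γ) :
    IsHomPoissonCoalgebra K A (Δ ∘ₗ α) (γ ∘ₗ α) α :=
  stmt10_general Δ γ α hcoassoc hskew hjac hleib hαΔ hαγ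
end

section
/- Let (M, μ_M, β) be a module over a left Hom-alternative algebra (A, μ, α). Define μ̃_M = μ_M ∘ (α²⊗Id_M), i.e., μ̃_M(x, m) = μ_M(α²(x), m). Then (M, μ̃_M, β) is also a module over (A, μ, α). -/
/-- Module structure over a left Hom-alternative algebra. -/
def IsLeftHomAltModule {K A M : Type*} [Field K] [AddCommGroup A] [Module K A]
    [AddCommGroup M] [Module K M] (mu : A →ₗ[K] A →ₗ[K] A) (alpha : A →ₗ[K] A)
    (muM : A →ₗ[K] M →ₗ[K] M) (beta : M →ₗ[K] M) : Prop :=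
  ∀ (x : A) (m : M), muM (alpha x) (muM x m) = muM (mu x x) (beta m)

theorem IsLeftHomAltModule.comp_right {K A M : Type*} [Field K] [AddCommGroup A] [Module K A]
    [AddCommGroup M] [Module K M] {mu : A →ₗ[K] A →ₗ[K] A} {alpha : A →ₗ[K] A}
    {muM : A →ₗ[K] M →ₗ[K] M} {beta : M →ₗ[K] M} (hmod : IsLeftHomAltModule mu alpha muM beta)
    (φ : A →ₗ[K] A) (hcomm : ∀ x, φ (alpha x) = alpha (φ x))
    (hsq : ∀ x, φ (mu x x) = mu (φ x) (φ x)) :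
    IsLeftHomAltModule mu alpha (muM ∘ₗ φ) beta := by
  intro x m
  simp only [LinearMap.comp_apply, hcomm, hsq]
  exact hmod (φ x) m

theorem stmt11_general {K A M : Type*} [Field K] [AddCommGroup A] [Module K A]
    [AddCommGroup M] [Module K M]
    (mu : A →ₗ[K] A →ₗ[K] A) (alpha : A →ₗ[K] A)
    (muM : A →ₗ[K] M →ₗ[K] M) (beta : M →ₗ[K] M)
    (hend : ∀ x y : A, alpha (mu x y) = mu (alpha x) (alpha y))
    (hmod : IsLeftHomAltModule mu alpha muM beta) :
    IsLeftHomAltModule mu alpha (muM ∘ₗ (alpha ∘ₗ alpha)) beta :=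
  hmod.comp_right (alpha ∘ₗ alpha) (fun _ => rfl) fun x => by
    simp only [LinearMap.comp_apply, hend]

theorem stmt11 {K A M : Type*} [Field K] [CharZero K] [AddCommGroup A] [Module K A]
    [AddCommGroup M] [Module K M]
    (mu : A →ₗ[K] A →ₗ[K] A) (alpha : A →ₗ[K] A)
    (muM : A →ₗ[K] M →ₗ[K] M) (beta : M →ₗ[K] M)
    (halg : LeftHomAlt mu alpha)
    (hend : ∀ x y : A, alpha (mu x y) = mu (alpha x) (alpha y))
    (hmod : IsLeftHomAltModule mu alpha muM beta) :
    IsLeftHomAltModule mu alpha (muM ∘ₗ (alpha ∘ₗ alpha)) beta :=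
  stmt11_general mu alpha muM beta hend hmod
end
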